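/- arXiv:0912.2505 — 2 statements merged into one kernel-verified Lean document; each statement's English description precedes it below -/
import Mathlib

section
/- Let n ≥ 0, let Ψ be a set-valued sheaf on smooth n-manifolds with a topological enhancement over ℝⁿ, and let M be a smooth n-manifold. Given an open cover {Uᵢ} of M by affine patches together with chosen diffeomorphisms φᵢ : Uᵢ → Vᵢ onto open subsets Vᵢ ⊆ ℝⁿ, topologize each set Ψ(Uᵢ) by transporting the given topology on Ψ(Vᵢ) along the bijection φᵢ* : Ψ(Vᵢ) → Ψ(Uᵢ), and give Ψ(M) the initial (subspace) topology induced by the canonical injection Ψ(M) → ∏ᵢ Ψ(Uᵢ). Then the resulting topology on Ψ(M) is independent both of the choice of cover of M by affine patches and of the chosen diffeomorphisms φᵢ. (Lemma 3.4 of the paper: the topology on Ψ(M) is well defined.) -/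
open scoped Manifold
open TopologicalSpace Set

noncomputable section

/-- A map `f : N → M` between smooth `n`-manifolds is an *open smooth embedding* if it is
injective and a smooth local diffeomorphism; equivalently, it is a topological open embedding
which is a diffeomorphism onto its open image. -/
def IsOpenSmoothEmbedding (n : ℕ)
    {N : Type} [TopologicalSpace N] [ChartedSpace (EuclideanSpace ℝ (Fin n)) N]
    {M : Type} [TopologicalSpace M] [ChartedSpace (EuclideanSpace ℝ (Fin n)) M]
    (f : N → M) : Prop :=
  Function.Injective f ∧ IsLocalDiffeomorph (𝓡 n) (𝓡 n) (⊤ : ℕ∞) f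

theorem IsOpenSmoothEmbedding.continuous {n : ℕ}
    {N : Type} [TopologicalSpace N] [ChartedSpace (EuclideanSpace ℝ (Fin n)) N]
    {M : Type} [TopologicalSpace M] [ChartedSpace (EuclideanSpace ℝ (Fin n)) M]
    {f : N → M} (hf : IsOpenSmoothEmbedding n f) : Continuous f :=
  hf.2.contMDiff.continuous

/-- A set-valued sheaf `Ψ` on the site of smooth `n`-manifolds (second countable, Hausdorff,
without boundary) and open smooth embeddings, presented in terms of its sections over the open
subsets of each smooth `n`-manifold.  `sect M U` is the set `Ψ(U)` of sections over the open
subset `U ⊆ M`; `res` is restriction to a smaller open subset, `pull` is pullback along an open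
smooth embedding of manifolds, and `pullD` is pullback along a (partial) diffeomorphism between
an open subset of one manifold and an open subset of another.  These operations are functorial
and satisfy the sheaf condition for arbitrary open covers. -/
structure SetSheaf (n : ℕ) : Type 1 where
  sect : ∀ (M : Type) [TopologicalSpace M] [ChartedSpace (EuclideanSpace ℝ (Fin n)) M]
      [IsManifold (𝓡 n) (⊤ : ℕ∞) M] [SecondCountableTopology M] [T2Space M],
      Opens M → Type
  res : ∀ (M : Type) [TopologicalSpace M] [ChartedSpace (EuclideanSpace ℝ (Fin n)) M]
      [IsManifold (𝓡 n) (⊤ : ℕ∞) M] [SecondCountableTopology M] [T2Space M]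
      {U V : Opens M}, V ≤ U → sect M U → sect M V
  res_id : ∀ (M : Type) [TopologicalSpace M] [ChartedSpace (EuclideanSpace ℝ (Fin n)) M]
      [IsManifold (𝓡 n) (⊤ : ℕ∞) M] [SecondCountableTopology M] [T2Space M]
      (U : Opens M) (s : sect M U), res M (le_refl U) s = s
  res_comp : ∀ (M : Type) [TopologicalSpace M] [ChartedSpace (EuclideanSpace ℝ (Fin n)) M]
      [IsManifold (𝓡 n) (⊤ : ℕ∞) M] [SecondCountableTopology M] [T2Space M]
      {U V W : Opens M} (hVU : V ≤ U) (hWV : W ≤ V) (s : sect M U),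
      res M hWV (res M hVU s) = res M (hWV.trans hVU) s
  pull : ∀ (N : Type) [TopologicalSpace N] [ChartedSpace (EuclideanSpace ℝ (Fin n)) N]
      [IsManifold (𝓡 n) (⊤ : ℕ∞) N] [SecondCountableTopology N] [T2Space N]
      (M : Type) [TopologicalSpace M] [ChartedSpace (EuclideanSpace ℝ (Fin n)) M]
      [IsManifold (𝓡 n) (⊤ : ℕ∞) M] [SecondCountableTopology M] [T2Space M]
      (f : N → M) (hf : IsOpenSmoothEmbedding n f) (U : Opens M),
      sect M U → sect N ⟨f ⁻¹' (U : Set M), U.isOpen.preimage hf.continuous⟩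
  pull_id : ∀ (M : Type) [TopologicalSpace M] [ChartedSpace (EuclideanSpace ℝ (Fin n)) M]
      [IsManifold (𝓡 n) (⊤ : ℕ∞) M] [SecondCountableTopology M] [T2Space M]
      (hid : IsOpenSmoothEmbedding n (id : M → M)) (U : Opens M) (s : sect M U),
      pull M M id hid U s = s
  pull_comp : ∀ (P : Type) [TopologicalSpace P] [ChartedSpace (EuclideanSpace ℝ (Fin n)) P]
      [IsManifold (𝓡 n) (⊤ : ℕ∞) P] [SecondCountableTopology P] [T2Space P]
      (N : Type) [TopologicalSpace N] [ChartedSpace (EuclideanSpace ℝ (Fin n)) N]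
      [IsManifold (𝓡 n) (⊤ : ℕ∞) N] [SecondCountableTopology N] [T2Space N]
      (M : Type) [TopologicalSpace M] [ChartedSpace (EuclideanSpace ℝ (Fin n)) M]
      [IsManifold (𝓡 n) (⊤ : ℕ∞) M] [SecondCountableTopology M] [T2Space M]
      (g : P → N) (f : N → M) (hg : IsOpenSmoothEmbedding n g)
      (hf : IsOpenSmoothEmbedding n f) (hfg : IsOpenSmoothEmbedding n (f ∘ g))
      (U : Opens M) (s : sect M U),
      pull P N g hg _ (pull N M f hf U s) = pull P M (f ∘ g) hfg U s
  pull_res : ∀ (N : Type) [TopologicalSpace N] [ChartedSpace (EuclideanSpace ℝ (Fin n)) N]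
      [IsManifold (𝓡 n) (⊤ : ℕ∞) N] [SecondCountableTopology N] [T2Space N]
      (M : Type) [TopologicalSpace M] [ChartedSpace (EuclideanSpace ℝ (Fin n)) M]
      [IsManifold (𝓡 n) (⊤ : ℕ∞) M] [SecondCountableTopology M] [T2Space M]
      (f : N → M) (hf : IsOpenSmoothEmbedding n f) {U V : Opens M} (h : V ≤ U)
      (s : sect M U),
      pull N M f hf V (res M h s)
        = res N (fun _ hx => h hx) (pull N M f hf U s)
  pullD : ∀ (N : Type) [TopologicalSpace N] [ChartedSpace (EuclideanSpace ℝ (Fin n)) N]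
      [IsManifold (𝓡 n) (⊤ : ℕ∞) N] [SecondCountableTopology N] [T2Space N]
      (M : Type) [TopologicalSpace M] [ChartedSpace (EuclideanSpace ℝ (Fin n)) M]
      [IsManifold (𝓡 n) (⊤ : ℕ∞) M] [SecondCountableTopology M] [T2Space M]
      (e : OpenPartialHomeomorph N M),
      ContMDiffOn (𝓡 n) (𝓡 n) (⊤ : ℕ∞) e e.source →
      ContMDiffOn (𝓡 n) (𝓡 n) (⊤ : ℕ∞) e.symm e.target →
      ∀ (V : Opens N) (U : Opens M), (V : Set N) ⊆ e.source → e '' (V : Set N) = (U : Set M) →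
      sect M U → sect N V
  pullD_refl : ∀ (M : Type) [TopologicalSpace M] [ChartedSpace (EuclideanSpace ℝ (Fin n)) M]
      [IsManifold (𝓡 n) (⊤ : ℕ∞) M] [SecondCountableTopology M] [T2Space M]
      (h₁ : ContMDiffOn (𝓡 n) (𝓡 n) (⊤ : ℕ∞) (OpenPartialHomeomorph.refl M) (OpenPartialHomeomorph.refl M).source)
      (h₂ : ContMDiffOn (𝓡 n) (𝓡 n) (⊤ : ℕ∞) (OpenPartialHomeomorph.refl M).symm (OpenPartialHomeomorph.refl M).target)
      (V : Opens M) (s : sect M V),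
      pullD M M (OpenPartialHomeomorph.refl M) h₁ h₂ V V (subset_univ _) (image_id _) s = s
  pullD_res : ∀ (N : Type) [TopologicalSpace N] [ChartedSpace (EuclideanSpace ℝ (Fin n)) N]
      [IsManifold (𝓡 n) (⊤ : ℕ∞) N] [SecondCountableTopology N] [T2Space N]
      (M : Type) [TopologicalSpace M] [ChartedSpace (EuclideanSpace ℝ (Fin n)) M]
      [IsManifold (𝓡 n) (⊤ : ℕ∞) M] [SecondCountableTopology M] [T2Space M]
      (e : OpenPartialHomeomorph N M)
      (h₁ : ContMDiffOn (𝓡 n) (𝓡 n) (⊤ : ℕ∞) e e.source)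
      (h₂ : ContMDiffOn (𝓡 n) (𝓡 n) (⊤ : ℕ∞) e.symm e.target)
      {V' V : Opens N} {U' U : Opens M} (hV : (V : Set N) ⊆ e.source)
      (hV' : (V' : Set N) ⊆ e.source)
      (hU : e '' (V : Set N) = (U : Set M)) (hU' : e '' (V' : Set N) = (U' : Set M))
      (hVV' : V' ≤ V) (hUU' : U' ≤ U) (s : sect M U),
      res N hVV' (pullD N M e h₁ h₂ V U hV hU s)
        = pullD N M e h₁ h₂ V' U' hV' hU' (res M hUU' s)
  pullD_trans : ∀ (P : Type) [TopologicalSpace P] [ChartedSpace (EuclideanSpace ℝ (Fin n)) P]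
      [IsManifold (𝓡 n) (⊤ : ℕ∞) P] [SecondCountableTopology P] [T2Space P]
      (N : Type) [TopologicalSpace N] [ChartedSpace (EuclideanSpace ℝ (Fin n)) N]
      [IsManifold (𝓡 n) (⊤ : ℕ∞) N] [SecondCountableTopology N] [T2Space N]
      (M : Type) [TopologicalSpace M] [ChartedSpace (EuclideanSpace ℝ (Fin n)) M]
      [IsManifold (𝓡 n) (⊤ : ℕ∞) M] [SecondCountableTopology M] [T2Space M]
      (e : OpenPartialHomeomorph P N) (f : OpenPartialHomeomorph N M)
      (he₁ : ContMDiffOn (𝓡 n) (𝓡 n) (⊤ : ℕ∞) e e.source)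
      (he₂ : ContMDiffOn (𝓡 n) (𝓡 n) (⊤ : ℕ∞) e.symm e.target)
      (hf₁ : ContMDiffOn (𝓡 n) (𝓡 n) (⊤ : ℕ∞) f f.source)
      (hf₂ : ContMDiffOn (𝓡 n) (𝓡 n) (⊤ : ℕ∞) f.symm f.target)
      (hef₁ : ContMDiffOn (𝓡 n) (𝓡 n) (⊤ : ℕ∞) (e.trans f) (e.trans f).source)
      (hef₂ : ContMDiffOn (𝓡 n) (𝓡 n) (⊤ : ℕ∞) (e.trans f).symm (e.trans f).target)
      (W : Opens P) (V : Opens N) (U : Opens M)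
      (hW : (W : Set P) ⊆ e.source) (hV : e '' (W : Set P) = (V : Set N))
      (hV' : (V : Set N) ⊆ f.source) (hU : f '' (V : Set N) = (U : Set M))
      (hW' : (W : Set P) ⊆ (e.trans f).source)
      (hU' : (e.trans f) '' (W : Set P) = (U : Set M))
      (s : sect M U),
      pullD P N e he₁ he₂ W V hW hV (pullD N M f hf₁ hf₂ V U hV' hU s)
        = pullD P M (e.trans f) hef₁ hef₂ W U hW' hU' s
  pull_pullD : ∀ (N : Type) [TopologicalSpace N] [ChartedSpace (EuclideanSpace ℝ (Fin n)) N]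
      [IsManifold (𝓡 n) (⊤ : ℕ∞) N] [SecondCountableTopology N] [T2Space N]
      (M : Type) [TopologicalSpace M] [ChartedSpace (EuclideanSpace ℝ (Fin n)) M]
      [IsManifold (𝓡 n) (⊤ : ℕ∞) M] [SecondCountableTopology M] [T2Space M]
      (f : N → M) (hf : IsOpenSmoothEmbedding n f) (e : OpenPartialHomeomorph N M)
      (h₁ : ContMDiffOn (𝓡 n) (𝓡 n) (⊤ : ℕ∞) e e.source)
      (h₂ : ContMDiffOn (𝓡 n) (𝓡 n) (⊤ : ℕ∞) e.symm e.target)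
      (hef : EqOn f e e.source)
      (V : Opens N) (U : Opens M) (hV : (V : Set N) ⊆ e.source)
      (hU : e '' (V : Set N) = (U : Set M)) (s : sect M U),
      pullD N M e h₁ h₂ V U hV hU s
        = res N (fun x hx => by
            show f x ∈ (U : Set M)
            rw [← hU]
            exact ⟨x, hx, (hef (hV hx)).symm⟩)
          (pull N M f hf U s)
  locality : ∀ (M : Type) [TopologicalSpace M] [ChartedSpace (EuclideanSpace ℝ (Fin n)) M]
      [IsManifold (𝓡 n) (⊤ : ℕ∞) M] [SecondCountableTopology M] [T2Space M]
      {ι : Type} (U : ι → Opens M) (s t : sect M (⨆ i, U i)),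
      (∀ i, res M (le_iSup U i) s = res M (le_iSup U i) t) → s = t
  gluing : ∀ (M : Type) [TopologicalSpace M] [ChartedSpace (EuclideanSpace ℝ (Fin n)) M]
      [IsManifold (𝓡 n) (⊤ : ℕ∞) M] [SecondCountableTopology M] [T2Space M]
      {ι : Type} (U : ι → Opens M) (s : ∀ i, sect M (U i)),
      (∀ i j, res M (inf_le_left : U i ⊓ U j ≤ U i) (s i)
        = res M (inf_le_right : U i ⊓ U j ≤ U j) (s j)) →
      ∃ σ : sect M (⨆ i, U i), ∀ i, res M (le_iSup U i) σ = s i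

/-- A topological enhancement of a set-valued sheaf on smooth `n`-manifolds over `ℝⁿ`:
a topology on the set of sections over every open subset of `ℝⁿ` such that (a) restriction to a
smaller open subset is continuous, (b) pullback along every diffeomorphism between open subsets
of `ℝⁿ` is a homeomorphism, and (c) for every open cover the canonical injection into the
product of the spaces of local sections is a topological embedding. -/
structure TopEnhancement (n : ℕ) (Ψ : SetSheaf n) : Type 1 where
  τ : ∀ U : Opens (EuclideanSpace ℝ (Fin n)),
      TopologicalSpace (Ψ.sect (EuclideanSpace ℝ (Fin n)) U)
  continuous_res : ∀ {U V : Opens (EuclideanSpace ℝ (Fin n))} (h : V ≤ U),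
      @Continuous _ _ (τ U) (τ V) (Ψ.res _ h)
  isHomeomorph_pullD :
    ∀ (e : OpenPartialHomeomorph (EuclideanSpace ℝ (Fin n)) (EuclideanSpace ℝ (Fin n)))
      (h₁ : ContMDiffOn (𝓡 n) (𝓡 n) (⊤ : ℕ∞) e e.source)
      (h₂ : ContMDiffOn (𝓡 n) (𝓡 n) (⊤ : ℕ∞) e.symm e.target)
      (V U : Opens (EuclideanSpace ℝ (Fin n)))
      (hV : (V : Set (EuclideanSpace ℝ (Fin n))) ⊆ e.source)
      (hU : e '' (V : Set (EuclideanSpace ℝ (Fin n))) = (U : Set (EuclideanSpace ℝ (Fin n)))),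
      @IsHomeomorph _ _ (τ U) (τ V) (Ψ.pullD _ _ e h₁ h₂ V U hV hU)
  isEmbedding_cover : ∀ {ι : Type} (U : ι → Opens (EuclideanSpace ℝ (Fin n))),
      @Topology.IsEmbedding _ _ (τ (⨆ i, U i)) (@Pi.topologicalSpace ι _ (fun i => τ (U i)))
        (fun s i => Ψ.res _ (le_iSup U i) s)
/-- The affine-patch topology on the set of sections of `Ψ` over an open subset `U` of a smooth
`n`-manifold `M`, relative to a family of smooth diffeomorphisms `e i` from open subsets of `M`
contained in `U` onto open subsets of `ℝⁿ` (the affine patches): each set of sections over a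
patch `(e i).source` is topologised by transporting the given topology on the sections over the
open subset `(e i).target ⊆ ℝⁿ` along the bijection given by pullback along `e i`, and the
sections over `U` get the initial (subspace) topology induced by the canonical injection into
the product of the sections over the patches. -/
def patchTop (n : ℕ) (Ψ : SetSheaf n) (T : TopEnhancement n Ψ)
    (M : Type) [TopologicalSpace M] [ChartedSpace (EuclideanSpace ℝ (Fin n)) M]
    [IsManifold (𝓡 n) (⊤ : ℕ∞) M] [SecondCountableTopology M] [T2Space M]
    (U : Opens M) {ι : Type} (e : ι → OpenPartialHomeomorph M (EuclideanSpace ℝ (Fin n)))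
    (hsm : ∀ i, ContMDiffOn (𝓡 n) (𝓡 n) (⊤ : ℕ∞) (e i) (e i).source)
    (hsm' : ∀ i, ContMDiffOn (𝓡 n) (𝓡 n) (⊤ : ℕ∞) (e i).symm (e i).target)
    (hsub : ∀ i, (e i).source ⊆ (U : Set M)) :
    TopologicalSpace (Ψ.sect M U) :=
  TopologicalSpace.induced
    (fun s i => Ψ.res M
      (show (⟨(e i).source, (e i).open_source⟩ : Opens M) ≤ U from hsub i) s)
    (@Pi.topologicalSpace ι _ (fun i =>
      TopologicalSpace.coinduced
        (Ψ.pullD M (EuclideanSpace ℝ (Fin n)) (e i) (hsm i) (hsm' i)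
          ⟨(e i).source, (e i).open_source⟩ ⟨(e i).target, (e i).open_target⟩
          subset_rfl (e i).image_source_eq_target)
        (T.τ ⟨(e i).target, (e i).open_target⟩)))

/-!
Pulling back along a chart `e` transports the topology of `Ψ(e(A))` to a topology on `Ψ(A)`, for
every open `A` inside the domain of `e`. Two charts transport the same topology, because the
comparison map is pullback along the transition diffeomorphism `f⁻¹ ≫ e` between open subsets of
`ℝⁿ`, a homeomorphism by the enhancement axioms. Transported topologies inherit continuity of
restrictions and the cover-embedding property from `ℝⁿ`. So to see that the restriction of
`Ψ(M)` to a patch `F` of the second atlas is continuous for the topology of the first atlas, it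
suffices to test it on the cover of `F` by the sets `F ∩ E`, `E` a patch of the first atlas;
there the topology may be computed through the chart of `E`, and the restriction factors through
`Ψ(E)`. By symmetry the two topologies agree.
-/

open scoped Topology

theorem OpenPartialHomeomorph.contMDiffOn_trans
    {𝕜 : Type*} [NontriviallyNormedField 𝕜]
    {E F G : Type*} [NormedAddCommGroup E] [NormedSpace 𝕜 E] [NormedAddCommGroup F]
    [NormedSpace 𝕜 F] [NormedAddCommGroup G] [NormedSpace 𝕜 G]
    {H₁ H₂ H₃ : Type*} [TopologicalSpace H₁] [TopologicalSpace H₂] [TopologicalSpace H₃]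
    {I : ModelWithCorners 𝕜 E H₁} {J : ModelWithCorners 𝕜 F H₂} {K : ModelWithCorners 𝕜 G H₃}
    {X Y Z : Type*} [TopologicalSpace X] [ChartedSpace H₁ X] [TopologicalSpace Y]
    [ChartedSpace H₂ Y] [TopologicalSpace Z] [ChartedSpace H₃ Z] {m : WithTop ℕ∞}
    (a : OpenPartialHomeomorph X Y) (b : OpenPartialHomeomorph Y Z)
    (ha : ContMDiffOn I J m a a.source) (hb : ContMDiffOn J K m b b.source) :
    ContMDiffOn I K m (a.trans b) (a.trans b).source := by
  rw [OpenPartialHomeomorph.coe_trans, OpenPartialHomeomorph.trans_source]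
  exact hb.comp (ha.mono inter_subset_left) inter_subset_right

namespace OpenPartialHomeomorph

variable {X Y Z : Type*} [TopologicalSpace X] [TopologicalSpace Y] [TopologicalSpace Z]
  (e : OpenPartialHomeomorph X Y) {s : Set X}

theorem image_subset_target (hs : s ⊆ e.source) : e '' s ⊆ e.target :=
  (image_mono hs).trans e.image_source_eq_target.subset

theorem symm_image_image_of_subset_source (hs : s ⊆ e.source) : e.symm '' (e '' s) = s :=
  e.toPartialEquiv.symm_image_image_of_subset_source hs

theorem image_subset_symm_trans_source (f : OpenPartialHomeomorph X Z)
    (he : s ⊆ e.source) (hf : s ⊆ f.source) : e '' s ⊆ (e.symm.trans f).source := by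
  rintro _ ⟨x, hx, rfl⟩
  exact ⟨e.map_source (he hx), by simpa [e.left_inv (he hx)] using hf hx⟩

theorem symm_trans_image_image (f : OpenPartialHomeomorph X Z) (he : s ⊆ e.source) :
    e.symm.trans f '' (e '' s) = f '' s := by
  rw [coe_trans, image_comp, e.symm_image_image_of_subset_source he]

end OpenPartialHomeomorph

theorem isOpenSmoothEmbedding_id {n : ℕ} (M : Type) [TopologicalSpace M]
    [ChartedSpace (EuclideanSpace ℝ (Fin n)) M] [IsManifold (𝓡 n) (⊤ : ℕ∞) M] :
    IsOpenSmoothEmbedding n (id : M → M) :=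
  ⟨Function.injective_id, by
    simpa using (Diffeomorph.refl (𝓡 n) M (⊤ : ℕ∞)).isLocalDiffeomorph⟩

namespace SetSheaf

variable {n : ℕ} (Ψ : SetSheaf n) {N M : Type}
  [TopologicalSpace N] [ChartedSpace (EuclideanSpace ℝ (Fin n)) N]
  [IsManifold (𝓡 n) (⊤ : ℕ∞) N] [SecondCountableTopology N] [T2Space N]
  [TopologicalSpace M] [ChartedSpace (EuclideanSpace ℝ (Fin n)) M]
  [IsManifold (𝓡 n) (⊤ : ℕ∞) M] [SecondCountableTopology M] [T2Space M]

theorem pullD_pullD_symm (e : OpenPartialHomeomorph N M)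
    (h₁ : ContMDiffOn (𝓡 n) (𝓡 n) (⊤ : ℕ∞) e e.source)
    (h₂ : ContMDiffOn (𝓡 n) (𝓡 n) (⊤ : ℕ∞) e.symm e.target)
    {V : Opens N} {U : Opens M} (hV : (V : Set N) ⊆ e.source) (hU : e '' V = U)
    (hU' : (U : Set M) ⊆ e.target) (hV' : e.symm '' U = V) (s : Ψ.sect N V) :
    Ψ.pullD N M e h₁ h₂ V U hV hU (Ψ.pullD M N e.symm h₂ h₁ U V hU' hV' s) = s := by
  have hV'' : (V : Set N) ⊆ (e.trans e.symm).source := fun x hx =>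
    ⟨hV hx, e.map_source (hV hx)⟩
  have hV''' : e.trans e.symm '' V = V := by
    rw [OpenPartialHomeomorph.coe_trans, image_comp, hU, hV']
  have hs : ContMDiffOn (𝓡 n) (𝓡 n) (⊤ : ℕ∞) (e.trans e.symm) (e.trans e.symm).source :=
    e.contMDiffOn_trans e.symm h₁ h₂
  have hs' : ContMDiffOn (𝓡 n) (𝓡 n) (⊤ : ℕ∞) (e.trans e.symm).symm
      (e.trans e.symm).target :=
    e.symm.symm.contMDiffOn_trans e.symm h₁ h₂
  -- `e ≫ e⁻¹` agrees with the open smooth embedding `id` on its source, so `pull_pullD` applies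
  have hid : EqOn id (e.trans e.symm) (e.trans e.symm).source := fun x hx =>
    (e.left_inv hx.1).symm
  rw [Ψ.pullD_trans N M N e e.symm h₁ h₂ h₂ h₁ hs hs' V U V hV hU hU' hV' hV'' hV''' s,
    Ψ.pull_pullD N N id (isOpenSmoothEmbedding_id N) _ _ _ hid V V hV'' hV''' s,
    Ψ.pull_id N (isOpenSmoothEmbedding_id N) V s, Ψ.res_id]

end SetSheaf

namespace TopEnhancement

variable {n : ℕ} {Ψ : SetSheaf n} (T : TopEnhancement n Ψ) {M : Type}
  [TopologicalSpace M] [ChartedSpace (EuclideanSpace ℝ (Fin n)) M]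
  [IsManifold (𝓡 n) (⊤ : ℕ∞) M] [SecondCountableTopology M] [T2Space M]

def chartTop (e : OpenPartialHomeomorph M (EuclideanSpace ℝ (Fin n)))
    (h₁ : ContMDiffOn (𝓡 n) (𝓡 n) (⊤ : ℕ∞) e e.source)
    (h₂ : ContMDiffOn (𝓡 n) (𝓡 n) (⊤ : ℕ∞) e.symm e.target)
    (A : Opens M) (B : Opens (EuclideanSpace ℝ (Fin n))) (hA : (A : Set M) ⊆ e.source)
    (hB : e '' A = B) : TopologicalSpace (Ψ.sect M A) :=
  .coinduced (Ψ.pullD M _ e h₁ h₂ A B hA hB) (T.τ B)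

variable (e : OpenPartialHomeomorph M (EuclideanSpace ℝ (Fin n)))
  (h₁ : ContMDiffOn (𝓡 n) (𝓡 n) (⊤ : ℕ∞) e e.source)
  (h₂ : ContMDiffOn (𝓡 n) (𝓡 n) (⊤ : ℕ∞) e.symm e.target)

theorem chartTop_eq_induced {A : Opens M} {B : Opens (EuclideanSpace ℝ (Fin n))}
    (hA : (A : Set M) ⊆ e.source) (hB : e '' A = B)
    (hB' : (B : Set (EuclideanSpace ℝ (Fin n))) ⊆ e.target) (hA' : e.symm '' B = A) :
    T.chartTop e h₁ h₂ A B hA hB = .induced (Ψ.pullD _ M e.symm h₂ h₁ B A hB' hA') (T.τ B) :=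
  let φ : Ψ.sect (EuclideanSpace ℝ (Fin n)) B ≃ Ψ.sect M A :=
    ⟨_, _, Ψ.pullD_pullD_symm e.symm h₂ h₁ hB' hA' hA hB,
      Ψ.pullD_pullD_symm e h₁ h₂ hA hB hB' hA'⟩
  (congrFun φ.induced_symm (T.τ B)).symm

theorem chartTop_le_chartTop (f : OpenPartialHomeomorph M (EuclideanSpace ℝ (Fin n)))
    (hf₁ : ContMDiffOn (𝓡 n) (𝓡 n) (⊤ : ℕ∞) f f.source)
    (hf₂ : ContMDiffOn (𝓡 n) (𝓡 n) (⊤ : ℕ∞) f.symm f.target)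
    {A : Opens M} {B C : Opens (EuclideanSpace ℝ (Fin n))} (hAe : (A : Set M) ⊆ e.source)
    (hB : e '' A = B) (hAf : (A : Set M) ⊆ f.source) (hC : f '' A = C) :
    T.chartTop e h₁ h₂ A B hAe hB ≤ T.chartTop f hf₁ hf₂ A C hAf hC := by
  have hC' : (C : Set (EuclideanSpace ℝ (Fin n))) ⊆ f.target := hC ▸ f.image_subset_target hAf
  have hA' : f.symm '' C = A := hC ▸ f.symm_image_image_of_subset_source hAf
  have hs₁ : ContMDiffOn (𝓡 n) (𝓡 n) (⊤ : ℕ∞) (f.symm.trans e) (f.symm.trans e).source :=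
    f.symm.contMDiffOn_trans e hf₂ h₁
  have hs₂ : ContMDiffOn (𝓡 n) (𝓡 n) (⊤ : ℕ∞) (f.symm.trans e).symm
      (f.symm.trans e).target :=
    e.symm.contMDiffOn_trans f.symm.symm h₂ hf₁
  have hCs : (C : Set (EuclideanSpace ℝ (Fin n))) ⊆ (f.symm.trans e).source :=
    hC ▸ f.image_subset_symm_trans_source e hAf hAe
  have hCB : f.symm.trans e '' C = B := by rw [← hC, f.symm_trans_image_image e hAf, hB]
  have htransition : Ψ.pullD _ M f.symm hf₂ hf₁ C A hC' hA' ∘ Ψ.pullD M _ e h₁ h₂ A B hAe hB =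
      Ψ.pullD _ _ (f.symm.trans e) hs₁ hs₂ C B hCs hCB :=
    funext (Ψ.pullD_trans _ M _ f.symm e hf₂ hf₁ h₁ h₂ hs₁ hs₂ C A B hC' hA' hAe hB hCs hCB)
  rw [T.chartTop_eq_induced f hf₁ hf₂ hAf hC hC' hA', ← continuous_iff_le_induced, chartTop,
    continuous_coinduced_dom, htransition]
  exact @IsHomeomorph.continuous _ _ (T.τ B) (T.τ C) _
    (T.isHomeomorph_pullD _ hs₁ hs₂ C B hCs hCB)

theorem chartTop_congr (f : OpenPartialHomeomorph M (EuclideanSpace ℝ (Fin n)))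
    (hf₁ : ContMDiffOn (𝓡 n) (𝓡 n) (⊤ : ℕ∞) f f.source)
    (hf₂ : ContMDiffOn (𝓡 n) (𝓡 n) (⊤ : ℕ∞) f.symm f.target)
    {A : Opens M} {B C : Opens (EuclideanSpace ℝ (Fin n))} (hAe : (A : Set M) ⊆ e.source)
    (hB : e '' A = B) (hAf : (A : Set M) ⊆ f.source) (hC : f '' A = C) :
    T.chartTop e h₁ h₂ A B hAe hB = T.chartTop f hf₁ hf₂ A C hAf hC :=
  le_antisymm (T.chartTop_le_chartTop e h₁ h₂ f hf₁ hf₂ hAe hB hAf hC)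
    (T.chartTop_le_chartTop f hf₁ hf₂ e h₁ h₂ hAf hC hAe hB)

theorem continuous_res_chartTop {A A' : Opens M} {B B' : Opens (EuclideanSpace ℝ (Fin n))}
    (hA : (A : Set M) ⊆ e.source) (hB : e '' A = B) (hA' : (A' : Set M) ⊆ e.source)
    (hB' : e '' A' = B') (h : A' ≤ A) :
    Continuous[T.chartTop e h₁ h₂ A B hA hB, T.chartTop e h₁ h₂ A' B' hA' hB'] (Ψ.res M h) := by
  have hBB' : B' ≤ B := by
    show (B' : Set (EuclideanSpace ℝ (Fin n))) ⊆ B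
    rw [← hB, ← hB']
    exact image_mono h
  have hcomm : Ψ.res M h ∘ Ψ.pullD M _ e h₁ h₂ A B hA hB =
      Ψ.pullD M _ e h₁ h₂ A' B' hA' hB' ∘ Ψ.res _ hBB' :=
    funext (Ψ.pullD_res M _ e h₁ h₂ hA hA' hB hB' h hBB')
  rw [chartTop, continuous_coinduced_dom, hcomm, continuous_iff_coinduced_le,
    ← coinduced_compose (tα := T.τ B)]
  exact coinduced_mono (continuous_iff_coinduced_le.mp (T.continuous_res hBB'))

theorem continuous_chartTop_of_cover {X : Type*} [TopologicalSpace X] {A : Opens M}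
    {B : Opens (EuclideanSpace ℝ (Fin n))} (hA : (A : Set M) ⊆ e.source) (hB : e '' A = B)
    {κ : Type} (A' : κ → Opens M) (B' : κ → Opens (EuclideanSpace ℝ (Fin n)))
    (hA' : ∀ k, (A' k : Set M) ⊆ e.source) (hB' : ∀ k, e '' A' k = B' k)
    (hle : ∀ k, A' k ≤ A) (hcov : (A : Set M) ⊆ ⋃ k, A' k) {g : X → Ψ.sect M A}
    (hg : ∀ k, Continuous[_, T.chartTop e h₁ h₂ (A' k) (B' k) (hA' k) (hB' k)]
      (Ψ.res M (hle k) ∘ g)) :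
    Continuous[_, T.chartTop e h₁ h₂ A B hA hB] g := by
  have hBcov : ⨆ k, B' k = B := by
    refine SetLike.coe_injective ?_
    rw [Opens.coe_iSup, ← hB, ← subset_antisymm (iUnion_subset hle) hcov, image_iUnion]
    exact iUnion_congr fun k => (hB' k).symm
  have hBt : (B : Set (EuclideanSpace ℝ (Fin n))) ⊆ e.target := hB ▸ e.image_subset_target hA
  have hBA : e.symm '' B = A := hB ▸ e.symm_image_image_of_subset_source hA
  rw [T.chartTop_eq_induced e h₁ h₂ hA hB hBt hBA, continuous_induced_rng]
  subst hBcov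
  let _ := T.τ (⨆ k, B' k)
  let _ := fun k => T.τ (B' k)
  rw [(T.isEmbedding_cover B').continuous_iff]
  refine continuous_pi fun k => ?_
  have hBt' : (B' k : Set (EuclideanSpace ℝ (Fin n))) ⊆ e.target :=
    hB' k ▸ e.image_subset_target (hA' k)
  have hBA' : e.symm '' B' k = A' k := hB' k ▸ e.symm_image_image_of_subset_source (hA' k)
  have hcomm : Ψ.res _ (le_iSup B' k) ∘ Ψ.pullD _ M e.symm h₂ h₁ _ A hBt hBA =
      Ψ.pullD _ M e.symm h₂ h₁ (B' k) (A' k) hBt' hBA' ∘ Ψ.res M (hle k) :=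
    funext (Ψ.pullD_res _ M e.symm h₂ h₁ hBt hBt' hBA hBA' (le_iSup B' k) (hle k))
  have hψ : Continuous[T.chartTop e h₁ h₂ (A' k) (B' k) (hA' k) (hB' k), T.τ (B' k)]
      (Ψ.pullD _ M e.symm h₂ h₁ (B' k) (A' k) hBt' hBA') := by
    rw [T.chartTop_eq_induced e h₁ h₂ (hA' k) (hB' k) hBt' hBA']
    exact continuous_induced_dom
  let _ := T.chartTop e h₁ h₂ (A' k) (B' k) (hA' k) (hB' k)
  change Continuous (Ψ.res _ (le_iSup B' k) ∘ Ψ.pullD _ M e.symm h₂ h₁ _ A hBt hBA ∘ g)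
  rw [← Function.comp_assoc, hcomm]
  exact hψ.comp (hg k)

end TopEnhancement

section PatchTopology

variable {n : ℕ} (Ψ : SetSheaf n) (T : TopEnhancement n Ψ)
  (M : Type) [TopologicalSpace M] [ChartedSpace (EuclideanSpace ℝ (Fin n)) M]
  [IsManifold (𝓡 n) (⊤ : ℕ∞) M] [SecondCountableTopology M] [T2Space M]
  (U : Opens M) {ι : Type} (e : ι → OpenPartialHomeomorph M (EuclideanSpace ℝ (Fin n)))
  (he₁ : ∀ i, ContMDiffOn (𝓡 n) (𝓡 n) (⊤ : ℕ∞) (e i) (e i).source)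
  (he₂ : ∀ i, ContMDiffOn (𝓡 n) (𝓡 n) (⊤ : ℕ∞) (e i).symm (e i).target)
  (hsubₑ : ∀ i, (e i).source ⊆ (U : Set M))

theorem continuous_res_patchTop (i : ι) :
    Continuous[patchTop n Ψ T M U e he₁ he₂ hsubₑ,
      T.chartTop (e i) (he₁ i) (he₂ i) ⟨(e i).source, (e i).open_source⟩
        ⟨(e i).target, (e i).open_target⟩ subset_rfl (e i).image_source_eq_target]
      (Ψ.res M (hsubₑ i)) :=
  continuous_iff_le_induced.mpr ((induced_mono (iInf_le _ i)).trans_eq induced_compose)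

theorem patchTop_le_patchTop (hcovₑ : (U : Set M) ⊆ ⋃ i, (e i).source) {κ : Type}
    (f : κ → OpenPartialHomeomorph M (EuclideanSpace ℝ (Fin n)))
    (hf₁ : ∀ j, ContMDiffOn (𝓡 n) (𝓡 n) (⊤ : ℕ∞) (f j) (f j).source)
    (hf₂ : ∀ j, ContMDiffOn (𝓡 n) (𝓡 n) (⊤ : ℕ∞) (f j).symm (f j).target)
    (hsub_f : ∀ j, (f j).source ⊆ (U : Set M)) :
    patchTop n Ψ T M U e he₁ he₂ hsubₑ ≤ patchTop n Ψ T M U f hf₁ hf₂ hsub_f := by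
  let _ := patchTop n Ψ T M U e he₁ he₂ hsubₑ
  refine continuous_iff_le_induced.mp
    (continuous_iInf_rng.mpr fun j => continuous_induced_rng.mpr ?_)
  let A : ι → Opens M := fun i =>
    ⟨(f j).source ∩ (e i).source, (f j).open_source.inter (e i).open_source⟩
  have hAf : ∀ i, (A i : Set M) ⊆ (f j).source := fun _ => inter_subset_left
  have hAe : ∀ i, (A i : Set M) ⊆ (e i).source := fun _ => inter_subset_right
  have hcov : (f j).source ⊆ ⋃ i, (A i : Set M) := fun x hx => by
    obtain ⟨i, hi⟩ := mem_iUnion.mp (hcovₑ (hsub_f j hx))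
    exact mem_iUnion.mpr ⟨i, hx, hi⟩
  refine T.continuous_chartTop_of_cover (f j) (hf₁ j) (hf₂ j) subset_rfl
    (f j).image_source_eq_target A
    (fun i => ⟨f j '' A i, (f j).isOpen_image_of_subset_source (A i).isOpen (hAf i)⟩)
    hAf (fun _ => rfl) hAf hcov fun i => ?_
  let C : Opens (EuclideanSpace ℝ (Fin n)) :=
    ⟨e i '' A i, (e i).isOpen_image_of_subset_source (A i).isOpen (hAe i)⟩
  rw [T.chartTop_congr (f j) (hf₁ j) (hf₂ j) (e i) (he₁ i) (he₂ i) (hAf i) rfl (hAe i)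
    (C := C) rfl]
  let _ := T.chartTop (e i) (he₁ i) (he₂ i) ⟨(e i).source, (e i).open_source⟩
    ⟨(e i).target, (e i).open_target⟩ subset_rfl (e i).image_source_eq_target
  let _ := T.chartTop (e i) (he₁ i) (he₂ i) (A i) C (hAe i) rfl
  have hcont := (T.continuous_res_chartTop (e i) (he₁ i) (he₂ i)
    (A := ⟨(e i).source, (e i).open_source⟩) (B := ⟨(e i).target, (e i).open_target⟩)
    (B' := C) subset_rfl (e i).image_source_eq_target (hAe i) rfl (hAe i)).comp
    (continuous_res_patchTop Ψ T M U e he₁ he₂ hsubₑ i)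
  exact hcont.congr fun s => (Ψ.res_comp M _ _ s).trans (Ψ.res_comp M _ _ s).symm

end PatchTopology

/-- **Lemma 3.4** (the topology on `Ψ(M)` is well defined).  Let `Ψ` be a set-valued sheaf on
smooth `n`-manifolds with a topological enhancement over `ℝⁿ`, and let `M` be a smooth
`n`-manifold.  Given any two open covers of `M` by affine patches, each patch equipped with a
chosen diffeomorphism onto an open subset of `ℝⁿ`, the resulting affine-patch topologies on
`Ψ(M)` agree: the topology is independent both of the choice of cover of `M` by affine patches
and of the chosen diffeomorphisms. -/
theorem patch_topology_well_defined (n : ℕ) (Ψ : SetSheaf n) (T : TopEnhancement n Ψ)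
    (M : Type) [TopologicalSpace M] [ChartedSpace (EuclideanSpace ℝ (Fin n)) M]
    [IsManifold (𝓡 n) (⊤ : ℕ∞) M] [SecondCountableTopology M] [T2Space M]
    {ι κ : Type}
    (e : ι → OpenPartialHomeomorph M (EuclideanSpace ℝ (Fin n)))
    (hsmₑ : ∀ i, ContMDiffOn (𝓡 n) (𝓡 n) (⊤ : ℕ∞) (e i) (e i).source)
    (hsmₑ' : ∀ i, ContMDiffOn (𝓡 n) (𝓡 n) (⊤ : ℕ∞) (e i).symm (e i).target)
    (hcovₑ : (⋃ i, (e i).source) = univ)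
    (f : κ → OpenPartialHomeomorph M (EuclideanSpace ℝ (Fin n)))
    (hsm_f : ∀ j, ContMDiffOn (𝓡 n) (𝓡 n) (⊤ : ℕ∞) (f j) (f j).source)
    (hsm_f' : ∀ j, ContMDiffOn (𝓡 n) (𝓡 n) (⊤ : ℕ∞) (f j).symm (f j).target)
    (hcov_f : (⋃ j, (f j).source) = univ) :
    patchTop n Ψ T M ⊤ e hsmₑ hsmₑ' (fun _ => subset_univ _)
      = patchTop n Ψ T M ⊤ f hsm_f hsm_f' (fun _ => subset_univ _) :=
  le_antisymm
    (patchTop_le_patchTop Ψ T M ⊤ e hsmₑ hsmₑ' _ hcovₑ.superset f hsm_f hsm_f' _)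
    (patchTop_le_patchTop Ψ T M ⊤ f hsm_f hsm_f' _ hcov_f.superset e hsmₑ hsmₑ' _)
end
end

section
/- Let M be a topological space and X a topological space of labels. Then the forgetful map C'(M × ℝ; X) → C(M × ℝ; X), (c, t) ↦ c, is a homotopy equivalence of topological spaces. (Asserted in Section 10 of the paper, following Segal: the configuration-space monoid C'(M × ℝ; X) is homotopy equivalent to the labelled configuration space C(M × ℝ; X).) -/
/-!
Fix a continuous strictly increasing `φ : ℝ → (0, 1)`. The straight-line homotopy
`x ↦ (1 - s) x + s φ x` consists of injective maps, so applying it to the `ℝ`-coordinate moves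
labelled configurations continuously. Hence `c ↦ (φ c, 1)` is a homotopy inverse of the
forgetful map: on `C'` one squeezes the configuration while interpolating the length `t` to `1`,
and convexity keeps the points strictly between `0` and the current length.
-/

open Set

/-- The relation identifying two ordered labelled configurations of cardinality `k` in `Y` with
labels in `X` when they differ by a permutation of the indices: the space of unordered labelled
configurations of cardinality `k` is the quotient `(C̃ₖ(Y) × Xᵏ)/Σₖ` by this relation, where
`C̃ₖ(Y) ⊆ Yᵏ` is the subspace of injective `k`-tuples. -/
def ConfigRel (Y X : Type) (k : ℕ)
    (p q : { v : Fin k → Y // Function.Injective v } × (Fin k → X)) : Prop :=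
  ∃ σ : Equiv.Perm (Fin k), (p.1 : Fin k → Y) ∘ σ = (q.1 : Fin k → Y) ∧ p.2 ∘ σ = q.2

/-- The labelled configuration space `C(Y; X)`: the disjoint union, over all `k ≥ 0`, of the
quotients `(C̃ₖ(Y) × Xᵏ)/Σₖ` of the spaces of injective `k`-tuples in `Y` labelled by `X` by the
diagonal action of the symmetric group `Σₖ`, with the quotient and disjoint-union topologies
(the subspace and product topologies on `C̃ₖ(Y) × Xᵏ ⊆ Yᵏ × Xᵏ`). -/
def LabelledConfig (Y X : Type) [TopologicalSpace Y] [TopologicalSpace X] : Type :=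
  Σ k : ℕ, Quot (ConfigRel Y X k)

instance (Y X : Type) [TopologicalSpace Y] [TopologicalSpace X] :
    TopologicalSpace (LabelledConfig Y X) :=
  instTopologicalSpaceSigma

/-- The space `C'(M × ℝ; X)`: the subspace of `C(M × ℝ; X) × [0, ∞)` of pairs `(c, t)` such
that every point of the underlying configuration of `c` has `ℝ`-coordinate in the open interval
`(0, t)`. -/
def CPrime (M X : Type) [TopologicalSpace M] [TopologicalSpace X] : Type :=
  { p : LabelledConfig (M × ℝ) X × ℝ //
      0 ≤ p.2 ∧ ∀ q : { v : Fin p.1.1 → M × ℝ // Function.Injective v } × (Fin p.1.1 → X),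
        Quot.mk (ConfigRel (M × ℝ) X p.1.1) q = p.1.2 →
          ∀ i, ((q.1 : Fin p.1.1 → M × ℝ) i).2 ∈ Set.Ioo (0 : ℝ) p.2 }

instance (M X : Type) [TopologicalSpace M] [TopologicalSpace X] :
    TopologicalSpace (CPrime M X) :=
  instTopologicalSpaceSubtype

open Function unitInterval

theorem ConfigRel.equivalence (Y X : Type) (k : ℕ) : Equivalence (ConfigRel Y X k) where
  refl _ := ⟨Equiv.refl _, rfl, rfl⟩
  symm := by
    rintro p q ⟨e, hv, hl⟩
    refine ⟨e.symm, funext fun i => ?_, funext fun i => ?_⟩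
    · simpa using (congrFun hv (e.symm i)).symm
    · simpa using (congrFun hl (e.symm i)).symm
  trans := by
    rintro p q r ⟨e, hv, hl⟩ ⟨e', hv', hl'⟩
    refine ⟨e'.trans e, funext fun i => ?_, funext fun i => ?_⟩
    · simpa using (congrFun hv (e' i)).trans (congrFun hv' i)
    · simpa using (congrFun hl (e' i)).trans (congrFun hl' i)

theorem ConfigRel.of_quot_mk_eq {Y X : Type} {k : ℕ}
    {p q : { v : Fin k → Y // Injective v } × (Fin k → X)}
    (h : Quot.mk (ConfigRel Y X k) p = Quot.mk _ q) : ConfigRel Y X k p q :=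
  (ConfigRel.equivalence Y X k).eqvGen_iff.mp (Quot.eq.mp h)

def ConfigRel.mapOrdered {Y Z X : Type} {k : ℕ} (g : Y → Z) (hg : Injective g)
    (p : { v : Fin k → Y // Injective v } × (Fin k → X)) :
    { v : Fin k → Z // Injective v } × (Fin k → X) :=
  (⟨g ∘ p.1, hg.comp p.1.2⟩, p.2)

theorem ConfigRel.mapOrdered_of_configRel {Y Z X : Type} {k : ℕ} (g : Y → Z) (hg : Injective g)
    {p q : { v : Fin k → Y // Injective v } × (Fin k → X)} (h : ConfigRel Y X k p q) :
    ConfigRel Z X k (mapOrdered g hg p) (mapOrdered g hg q) := by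
  obtain ⟨e, hv, hl⟩ := h
  exact ⟨e, congrArg (g ∘ ·) hv, hl⟩

namespace LabelledConfig

variable {Y Z X : Type} [TopologicalSpace Y] [TopologicalSpace Z] [TopologicalSpace X]

def map (g : Y → Z) (hg : Injective g) (c : LabelledConfig Y X) : LabelledConfig Z X :=
  ⟨c.1, Quot.map (ConfigRel.mapOrdered g hg) (fun _ _ => ConfigRel.mapOrdered_of_configRel g hg)
    c.2⟩

theorem map_id (c : LabelledConfig Y X) : c.map id injective_id = c := by
  obtain ⟨k, c⟩ := c
  induction c using Quot.ind
  rfl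

def ForallPoints (P : Y → Prop) (c : LabelledConfig Y X) : Prop :=
  ∀ q : { v : Fin c.1 → Y // Injective v } × (Fin c.1 → X),
    Quot.mk (ConfigRel Y X c.1) q = c.2 → ∀ i, P ((q.1 : Fin c.1 → Y) i)

theorem forallPoints_mk {P : Y → Prop} {k : ℕ}
    (a : { v : Fin k → Y // Injective v } × (Fin k → X)) :
    ForallPoints P (⟨k, Quot.mk _ a⟩ : LabelledConfig Y X) ↔
      ∀ i, P ((a.1 : Fin k → Y) i) := by
  refine ⟨fun h => h a rfl, fun h q hq i => ?_⟩
  obtain ⟨e, hv, -⟩ := ConfigRel.of_quot_mk_eq hq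
  simpa [← hv] using h (e.symm i)

theorem ForallPoints.map {P : Z → Prop} {g : Y → Z} (hg : Injective g) {c : LabelledConfig Y X}
    (h : ForallPoints (P ∘ g) c) : ForallPoints P (c.map g hg) := by
  obtain ⟨k, c⟩ := c
  induction c using Quot.ind with
  | mk a => exact (forallPoints_mk _).mpr ((forallPoints_mk a).mp h)

theorem continuous_map_family {T : Type} [TopologicalSpace T] [LocallyCompactSpace T]
    {g : T → Y → Z} (hg : Continuous (uncurry g)) (hinj : ∀ t, Injective (g t)) :
    Continuous fun p : T × LabelledConfig Y X => p.2.map (g p.1) (hinj p.1) := by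
  let F : (Σ k, Quot (ConfigRel Y X k) × T) → LabelledConfig Z X :=
    fun p => map (g p.2.2) (hinj p.2.2) ⟨p.1, p.2.1⟩
  have hF : Continuous F := by
    refine continuous_sigma fun k => isQuotientMap_quot_mk.continuous_lift_prod_left ?_
    change Continuous fun p : ({ v : Fin k → Y // Injective v } × (Fin k → X)) × T =>
      (⟨k, Quot.mk _ (ConfigRel.mapOrdered (g p.2) (hinj p.2) p.1)⟩ : LabelledConfig Z X)
    refine continuous_sigmaMk.comp (continuous_quot_mk.comp ?_)
    refine .prodMk (.subtype_mk (continuous_pi fun i => ?_) _) (by fun_prop)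
    exact hg.comp (continuous_snd.prodMk
      ((continuous_apply i).comp (continuous_subtype_val.comp (by fun_prop))))
  exact hF.comp (Homeomorph.sigmaProdDistrib.continuous.comp continuous_swap)

end LabelledConfig

namespace CPrime

noncomputable def squeeze (x : ℝ) : ℝ := Real.arctan x / 4 + 1 / 2

theorem squeeze_mem_Ioo (x : ℝ) : squeeze x ∈ Ioo (0 : ℝ) 1 := by
  have := Real.arctan_lt_pi_div_two x
  have := Real.neg_pi_div_two_lt_arctan x
  have := Real.pi_lt_four
  constructor <;> unfold squeeze <;> linarith

theorem strictMono_squeeze : StrictMono squeeze := fun _ _ h => by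
  have := Real.arctan_strictMono h
  unfold squeeze; linarith

theorem continuous_squeeze : Continuous squeeze := by
  unfold squeeze; fun_prop

noncomputable def squeezeAt (s x : ℝ) : ℝ := (1 - s) * x + s * squeeze x

theorem continuous_squeezeAt : Continuous (uncurry squeezeAt) := by
  have := continuous_squeeze
  unfold squeezeAt; fun_prop

theorem strictMono_squeezeAt {s : ℝ} (hs₀ : 0 ≤ s) (hs₁ : s ≤ 1) :
    StrictMono (squeezeAt s) := by
  intro a b hab
  have := strictMono_squeeze hab
  unfold squeezeAt
  rcases hs₁.lt_or_eq with hs | rfl <;> nlinarith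

theorem squeezeAt_mem_Ioo {s t x : ℝ} (hs₀ : 0 ≤ s) (hs₁ : s ≤ 1) (hx : x ∈ Ioo 0 t) :
    squeezeAt s x ∈ Ioo 0 ((1 - s) * t + s) := by
  obtain ⟨hx₀, hxt⟩ := hx
  obtain ⟨hφ₀, hφ₁⟩ := squeeze_mem_Ioo x
  unfold squeezeAt
  constructor
  · rcases hs₁.lt_or_eq with hs | rfl <;> nlinarith
  · rcases hs₀.lt_or_eq with hs | rfl <;> nlinarith

theorem squeezeAt_zero : squeezeAt 0 = id := by
  funext x
  simp [squeezeAt]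

variable {M X : Type}

noncomputable def verticalSqueeze (s : I) : M × ℝ → M × ℝ := Prod.map id (squeezeAt s)

theorem injective_verticalSqueeze (s : I) : Injective (verticalSqueeze (M := M) s) :=
  injective_id.prodMap (strictMono_squeezeAt s.2.1 s.2.2).injective

theorem verticalSqueeze_zero : verticalSqueeze (M := M) 0 = id := by
  simp [verticalSqueeze, squeezeAt_zero]

variable [TopologicalSpace M] [TopologicalSpace X]

theorem map_verticalSqueeze_zero (c : LabelledConfig (M × ℝ) X) :
    c.map (verticalSqueeze 0) (injective_verticalSqueeze 0) = c := by
  simp only [verticalSqueeze_zero, LabelledConfig.map_id]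

theorem continuous_verticalSqueeze : Continuous (uncurry (verticalSqueeze (M := M))) :=
  continuous_snd.fst.prodMk
    (continuous_squeezeAt.comp (continuous_subtype_val.comp continuous_fst |>.prodMk
      continuous_snd.snd))

theorem forallPoints_map_verticalSqueeze (s : I) {c : LabelledConfig (M × ℝ) X} {a : ℝ}
    (h : c.ForallPoints fun y => squeezeAt s y.2 ∈ Ioo 0 a) :
    (c.map (verticalSqueeze s) (injective_verticalSqueeze s)).ForallPoints
      fun y => y.2 ∈ Ioo 0 a :=
  LabelledConfig.ForallPoints.map _ h

def forget : C(CPrime M X, LabelledConfig (M × ℝ) X) :=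
  ⟨fun p => p.val.1, continuous_fst.comp continuous_subtype_val⟩

noncomputable def squeezeFamily (s : I) (p : CPrime M X) : CPrime M X :=
  ⟨(p.val.1.map (verticalSqueeze s) (injective_verticalSqueeze s), (1 - s) * p.val.2 + s),
    by nlinarith [p.2.1, s.2.1, s.2.2],
    forallPoints_map_verticalSqueeze s fun q hq i => squeezeAt_mem_Ioo s.2.1 s.2.2 (p.2.2 q hq i)⟩

theorem continuous_squeezeFamily : Continuous (uncurry (squeezeFamily (M := M) (X := X))) := by
  refine .subtype_mk (.prodMk ?_ ?_) _
  · exact (LabelledConfig.continuous_map_family continuous_verticalSqueeze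
      injective_verticalSqueeze).comp (continuous_fst.prodMk
        (continuous_fst.comp (continuous_subtype_val.comp continuous_snd)))
  · have ht : Continuous fun p : I × CPrime M X => p.2.val.2 :=
      continuous_snd.comp (continuous_subtype_val.comp continuous_snd)
    have hs : Continuous fun p : I × CPrime M X => (p.1 : ℝ) :=
      continuous_subtype_val.comp continuous_fst
    exact ((continuous_const.sub hs).mul ht).add hs

noncomputable def ofConfig : C(LabelledConfig (M × ℝ) X, CPrime M X) :=
  ⟨fun c => ⟨(c.map (verticalSqueeze 1) (injective_verticalSqueeze 1), 1), zero_le_one,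
      forallPoints_map_verticalSqueeze 1 fun _ _ _ => by
        simpa [squeezeAt] using squeeze_mem_Ioo _⟩,
    .subtype_mk ((LabelledConfig.continuous_map_family continuous_verticalSqueeze
      injective_verticalSqueeze).comp (continuous_const.prodMk continuous_id) |>.prodMk
        continuous_const) _⟩

theorem ofConfig_comp_forget_homotopic :
    (ContinuousMap.id (CPrime M X)).Homotopic (ofConfig.comp forget) :=
  ⟨{ toFun := uncurry squeezeFamily
     continuous_toFun := continuous_squeezeFamily
     map_zero_left p := Subtype.ext <| Prod.ext (map_verticalSqueeze_zero _) <|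
       show (1 - ((0 : I) : ℝ)) * p.val.2 + (0 : I) = p.val.2 by simp
     map_one_left p := Subtype.ext <| Prod.ext rfl <|
       show (1 - ((1 : I) : ℝ)) * p.val.2 + (1 : I) = 1 by simp }⟩

theorem forget_comp_ofConfig_homotopic :
    (ContinuousMap.id (LabelledConfig (M × ℝ) X)).Homotopic (forget.comp ofConfig) :=
  ⟨{ toFun p := p.2.map (verticalSqueeze p.1) (injective_verticalSqueeze p.1)
     continuous_toFun := LabelledConfig.continuous_map_family continuous_verticalSqueeze
       injective_verticalSqueeze
     map_zero_left := map_verticalSqueeze_zero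
     map_one_left _ := rfl }⟩

end CPrime

open CPrime in
/-- **Segal's comparison** (asserted in Section 10 of the paper): for any topological spaces `M`
and `X`, the forgetful map `C'(M × ℝ; X) → C(M × ℝ; X)`, `(c, t) ↦ c`, is a homotopy
equivalence of topological spaces. -/
theorem cprime_forget_homotopyEquiv (M X : Type) [TopologicalSpace M] [TopologicalSpace X] :
    ∃ h : ContinuousMap.HomotopyEquiv (CPrime M X) (LabelledConfig (M × ℝ) X),
      ∀ p : CPrime M X, h.toFun p = p.val.1 :=
  ⟨⟨forget, ofConfig, ofConfig_comp_forget_homotopic.symm,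
      forget_comp_ofConfig_homotopic.symm⟩, fun _ => rfl⟩
end
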